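/- With H₂ = 1 + 4·M₂(ℤ₂) and H₃ = 1 + 8·M₂(ℤ₂) inside GL₂(ℤ₂), the set of squares of elements of H₂ equals H₃, i.e., H₂² = H₃. -/

import Mathlib

open Matrix

/-- The principal congruence subgroup `1 + 2ᵏ·M₂(ℤ₂)` of `GL₂(ℤ₂)`, i.e. the kernel of
reduction modulo `2ᵏ`. -/
noncomputable def congSubgroup (k : ℕ) : Subgroup (GL (Fin 2) ℤ_[2]) :=
  MonoidHom.ker (Matrix.GeneralLinearGroup.map
    (Ideal.Quotient.mk (Ideal.span {(2 : ℤ_[2]) ^ k})))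

/-!
Since `(1 + 4A)² = 1 + 8(A + 2A²)`, squares of `H₂` lie in `H₃`, and `H₃ ⊆ H₂²` amounts to solving
`A + 2A² = B` for every 2-adic matrix `B`. For the entrywise sup norm on `M₂(ℤ₂)`, which is
ultrametric and submultiplicative with all matrices of norm `≤ 1`, the map `A ↦ B - 2A²` is a
contraction with constant `‖2‖ = 1/2`, so its fixed point is a solution. The square root
`1 + 4A` is invertible because its square is.
-/

namespace Matrix

section UltrametricNorm

attribute [local instance] Matrix.seminormedAddCommGroup

theorem isUltrametricDist {m n α : Type*} [Fintype m] [Fintype n] [SeminormedAddCommGroup α]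
    [IsUltrametricDist α] : IsUltrametricDist (Matrix m n α) :=
  inferInstanceAs (IsUltrametricDist (m → n → α))

attribute [local instance] Matrix.isUltrametricDist

theorem norm_mul_le_of_isUltrametricDist {l m n α : Type*} [Fintype l] [Fintype m] [Fintype n]
    [SeminormedRing α] [IsUltrametricDist α] (A : Matrix l m α) (B : Matrix m n α) :
    ‖A * B‖ ≤ ‖A‖ * ‖B‖ :=
  (norm_le_iff (by positivity)).2 fun i j ↦
    IsUltrametricDist.norm_sum_le_of_forall_le_of_nonneg (by positivity) fun k _ ↦
      (norm_mul_le _ _).trans <| mul_le_mul (norm_entry_le_entrywise_sup_norm A)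
        (norm_entry_le_entrywise_sup_norm B) (norm_nonneg _) (norm_nonneg _)

end UltrametricNorm

section PadicInt

attribute [local instance] Matrix.normedAddCommGroup Matrix.normedSpace Matrix.normSMulClass
  Matrix.isUltrametricDist

variable {n : Type*} [Fintype n] {p : ℕ} [Fact p.Prime]

theorem norm_le_one_of_padicInt (A : Matrix n n ℤ_[p]) : ‖A‖ ≤ 1 :=
  (norm_le_iff zero_le_one).2 fun _ _ ↦ PadicInt.norm_le_one _

theorem norm_mul_self_sub_mul_self_le (A A' : Matrix n n ℤ_[p]) :
    ‖A * A - A' * A'‖ ≤ ‖A - A'‖ := by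
  have hsplit : A * A - A' * A' = A * (A - A') + (A - A') * A' := by noncomm_ring
  rw [hsplit]
  refine (IsUltrametricDist.norm_add_le_max _ _).trans (max_le ?_ ?_)
  · exact (norm_mul_le_of_isUltrametricDist _ _).trans
      (mul_le_of_le_one_left (norm_nonneg _) (norm_le_one_of_padicInt A))
  · exact (norm_mul_le_of_isUltrametricDist _ _).trans
      (mul_le_of_le_one_right (norm_nonneg _) (norm_le_one_of_padicInt A'))

theorem exists_add_smul_mul_self_eq {c : ℤ_[p]} (hc : ‖c‖ < 1) (B : Matrix n n ℤ_[p]) :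
    ∃ A : Matrix n n ℤ_[p], A + c • (A * A) = B := by
  -- the sup-norm uniformity agrees with the product one only up to unfolding, not reducibly
  have : @CompleteSpace (Matrix n n ℤ_[p]) PseudoMetricSpace.toUniformSpace :=
    inferInstanceAs (CompleteSpace (n → n → ℤ_[p]))
  have hT : ContractingWith ‖c‖₊ fun A : Matrix n n ℤ_[p] ↦ B - c • (A * A) := by
    refine ⟨hc, LipschitzWith.of_dist_le_mul fun A A' ↦ ?_⟩
    rw [dist_eq_norm, dist_eq_norm, sub_sub_sub_cancel_left, ← smul_sub, norm_smul,
      coe_nnnorm]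
    exact mul_le_mul_of_nonneg_left (norm_mul_self_sub_mul_self_le A' A |>.trans_eq
      (norm_sub_rev _ _)) (norm_nonneg c)
  exact ⟨hT.fixedPoint, eq_sub_iff_add_eq.1 hT.fixedPoint_isFixedPt.symm⟩

end PadicInt

end Matrix

theorem one_add_two_pow_smul_sq {S R : Type*} [CommSemiring S] [Semiring R] [Algebra S R]
    (k : ℕ) (A : R) :
    (1 + (2 : S) ^ (k + 1) • A) ^ 2 = 1 + (2 : S) ^ (k + 2) • (A + (2 : S) ^ k • (A * A)) := by
  simp only [sq, add_mul, mul_add, one_mul, mul_one, smul_mul_smul_comm, smul_add, smul_smul,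
    ← pow_add]
  module

theorem mem_congSubgroup_iff_dvd {k : ℕ} {g : GL (Fin 2) ℤ_[2]} :
    g ∈ congSubgroup k ↔
      ∀ i j, (2 : ℤ_[2]) ^ k ∣ g i j - (1 : Matrix (Fin 2) (Fin 2) ℤ_[2]) i j := by
  simp only [congSubgroup, MonoidHom.mem_ker, Units.ext_iff, ← Matrix.ext_iff,
    GeneralLinearGroup.map_apply, Units.val_one, ← Ideal.mem_span_singleton, ← Ideal.Quotient.eq,
    one_apply, apply_ite (Ideal.Quotient.mk _), map_one, map_zero]

theorem mem_congSubgroup_iff {k : ℕ} {g : GL (Fin 2) ℤ_[2]} :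
    g ∈ congSubgroup k ↔ ∃ A : Matrix (Fin 2) (Fin 2) ℤ_[2], g.val = 1 + (2 : ℤ_[2]) ^ k • A := by
  rw [mem_congSubgroup_iff_dvd]
  constructor
  · intro h
    choose A hA using h
    exact ⟨of A, ext fun i j ↦ by simp [← hA]⟩
  · rintro ⟨A, hA⟩ i j
    exact ⟨A i j, by simp [hA]⟩

theorem setOf_sq_congSubgroup {k : ℕ} (hk : 2 ≤ k) :
    {g : GL (Fin 2) ℤ_[2] | ∃ h ∈ congSubgroup k, g = h ^ 2} = congSubgroup (k + 1) := by
  obtain ⟨m, rfl⟩ : ∃ m, k = m + 1 + 1 := ⟨k - 2, by omega⟩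
  ext g
  constructor
  · rintro ⟨h, hh, rfl⟩
    obtain ⟨A, hA⟩ := mem_congSubgroup_iff.1 hh
    exact mem_congSubgroup_iff.2 ⟨_, by rw [Units.val_pow_eq_pow_val, hA, one_add_two_pow_smul_sq]⟩
  · intro hg
    obtain ⟨B, hB⟩ := mem_congSubgroup_iff.1 hg
    have hc : ‖(2 : ℤ_[2]) ^ (m + 1)‖ < 1 := by
      simpa using (PadicInt.norm_lt_one_iff_dvd _).2 (dvd_pow_self (2 : ℤ_[2]) m.succ_ne_zero)
    obtain ⟨A, hA⟩ := Matrix.exists_add_smul_mul_self_eq hc B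
    have hsq : (1 + (2 : ℤ_[2]) ^ (m + 1 + 1) • A) ^ 2 = g := by
      rw [hB, one_add_two_pow_smul_sq, hA]
    have hunit : IsUnit (1 + (2 : ℤ_[2]) ^ (m + 1 + 1) • A) :=
      (isUnit_pow_iff two_ne_zero).1 (hsq ▸ g.isUnit)
    exact ⟨hunit.unit, mem_congSubgroup_iff.2 ⟨A, rfl⟩, Units.ext <| by simpa using hsq.symm⟩

/-- With `H₂ = 1 + 4·M₂(ℤ₂)` and `H₃ = 1 + 8·M₂(ℤ₂)` inside `GL₂(ℤ₂)`, the set of squares of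
elements of `H₂` equals `H₃`, i.e. `H₂² = H₃`. -/
theorem squares_of_H2_eq_H3 :
    {g : GL (Fin 2) ℤ_[2] | ∃ h ∈ congSubgroup 2, g = h ^ 2} =
      (congSubgroup 3 : Set (GL (Fin 2) ℤ_[2])) :=
  setOf_sq_congSubgroup le_rfl
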